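/- arXiv:2201.01729 — 10 statements merged into one kernel-verified Lean document; each statement's English description precedes it below -/
import Mathlib

section
/- Let Θ be a finite nonempty set and l, u : Θ → ℝ with 0 ≤ l(x) ≤ u(x) for all x, ∑_{x∈Θ} l(x) ≤ 1 ≤ ∑_{x∈Θ} u(x), and ∑_{x∈Θ}(u(x) − l(x)) > 0. Then the intersection probability p[(l,u)](x) = l(x) + β[(l,u)]·(u(x) − l(x)) is a probability distribution on Θ (nonnegative and summing to 1) and it is consistent with the interval system: l(x) ≤ p[(l,u)](x) ≤ u(x) for every x ∈ Θ. -/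
open Finset

/-- `β[(l,u)] = (1 - ∑ l) / ∑ (u - l)`. -/
noncomputable def intervalBeta {Θ : Type*} [Fintype Θ] (l u : Θ → ℝ) : ℝ :=
  (1 - ∑ x : Θ, l x) / (∑ x : Θ, (u x - l x))

/-- The intersection probability `p[(l,u)](x) = l(x) + β[(l,u)]⬝(u(x) - l(x))`. -/
noncomputable def intersectionProb {Θ : Type*} [Fintype Θ] (l u : Θ → ℝ) (x : Θ) : ℝ :=
  l x + intervalBeta l u * (u x - l x)

/-!
`p[(l,u)](x)` is the point of the segment `[l(x), u(x)]` at the common parameter `β[(l,u)]`,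
chosen so that the total mass `∑ l + β ∑ (u - l)` is exactly `1`. The bounds
`∑ l ≤ 1 ≤ ∑ u` say precisely that `β ∈ [0, 1]`, so each `p(x)` lies between `l(x)` and
`u(x)`, and in particular is nonnegative.
-/

section

variable {Θ : Type*} [Fintype Θ] {l u : Θ → ℝ}

theorem intervalBeta_nonneg (hlu : ∀ x, l x ≤ u x) (hlsum : ∑ x, l x ≤ 1) :
    0 ≤ intervalBeta l u :=
  div_nonneg (sub_nonneg.2 hlsum) (sum_nonneg fun x _ => sub_nonneg.2 (hlu x))

theorem intervalBeta_le_one (husum : 1 ≤ ∑ x, u x) (hpos : 0 < ∑ x, (u x - l x)) :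
    intervalBeta l u ≤ 1 := by
  rw [intervalBeta, div_le_one hpos, sum_sub_distrib]
  linarith

theorem sum_intersectionProb (hne : ∑ x, (u x - l x) ≠ 0) :
    ∑ x, intersectionProb l u x = 1 := by
  simp only [intersectionProb, intervalBeta, sum_add_distrib, ← mul_sum, div_mul_cancel₀ _ hne]
  ring

theorem intersectionProb_eq_lineMap (x : Θ) :
    intersectionProb l u x = AffineMap.lineMap (l x) (u x) (intervalBeta l u) := by
  rw [intersectionProb, AffineMap.lineMap_apply_ring']
  ring

theorem intersectionProb_mem_Icc {x : Θ} (hlu : l x ≤ u x)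
    (hβ : intervalBeta l u ∈ Set.Icc 0 1) :
    intersectionProb l u x ∈ Set.Icc (l x) (u x) := by
  rw [intersectionProb_eq_lineMap, ← segment_eq_Icc hlu]
  exact lineMap_mem_segment ℝ _ _ hβ

end

theorem intersectionProb_isProbability_and_consistent_general
    {Θ : Type*} [Fintype Θ] (l u : Θ → ℝ)
    (hl : ∀ x, 0 ≤ l x) (hlu : ∀ x, l x ≤ u x)
    (hlsum : ∑ x : Θ, l x ≤ 1) (husum : 1 ≤ ∑ x : Θ, u x)
    (hpos : 0 < ∑ x : Θ, (u x - l x)) :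
    (∀ x, 0 ≤ intersectionProb l u x) ∧
    (∑ x : Θ, intersectionProb l u x) = 1 ∧
    (∀ x, l x ≤ intersectionProb l u x ∧ intersectionProb l u x ≤ u x) := by
  have hβ : intervalBeta l u ∈ Set.Icc 0 1 :=
    ⟨intervalBeta_nonneg hlu hlsum, intervalBeta_le_one husum hpos⟩
  have hcons x : l x ≤ intersectionProb l u x ∧ intersectionProb l u x ≤ u x :=
    intersectionProb_mem_Icc (hlu x) hβ
  exact ⟨fun x => (hl x).trans (hcons x).1, sum_intersectionProb hpos.ne', hcons⟩

/-- under the consistency conditions on the interval system `(l,u)`,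
the intersection probability is a probability distribution on `Θ` and is consistent
with the interval system. -/
theorem intersectionProb_isProbability_and_consistent
    {Θ : Type*} [Fintype Θ] [Nonempty Θ] (l u : Θ → ℝ)
    (hl : ∀ x, 0 ≤ l x) (hlu : ∀ x, l x ≤ u x)
    (hlsum : ∑ x : Θ, l x ≤ 1) (husum : 1 ≤ ∑ x : Θ, u x)
    (hpos : 0 < ∑ x : Θ, (u x - l x)) :
    (∀ x, 0 ≤ intersectionProb l u x) ∧
    (∑ x : Θ, intersectionProb l u x) = 1 ∧
    (∀ x, l x ≤ intersectionProb l u x ∧ intersectionProb l u x ≤ u x) :=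
  intersectionProb_isProbability_and_consistent_general l u hl hlu hlsum husum hpos
end

section
/- Let Θ be a finite nonempty set and l, u : Θ → ℝ with 0 ≤ l(x) ≤ u(x) for all x and ∑_{x∈Θ} l(x) < 1. If there exists x ∈ Θ with l(x) = u(x) > 0, then Sudano's transform PraPl[(l,u)](x) = l(x) + ((1 − ∑_{y∈Θ} l(y)) / ∑_{y∈Θ} u(y))·u(x) satisfies PraPl[(l,u)](x) > u(x); in particular PraPl[(l,u)] falls outside the interval probability system P(l,u) = {p : l(y) ≤ p(y) ≤ u(y) ∀y}. -/
open Finset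

/-- Sudano's transform `PraPl[(l,u)](x) = l(x) + ((1 - ∑ l) / ∑ u)⬝u(x)`. -/
noncomputable def praPl {Θ : Type*} [Fintype Θ] (l u : Θ → ℝ) (x : Θ) : ℝ :=
  l x + ((1 - ∑ y : Θ, l y) / (∑ y : Θ, u y)) * u x

theorem lt_praPl {Θ : Type*} [Fintype Θ] {l u : Θ → ℝ} (hl : ∑ y, l y < 1)
    (hu : 0 < ∑ y, u y) {x : Θ} (hx : 0 < u x) : l x < praPl l u x :=
  lt_add_of_pos_right _ (mul_pos (div_pos (sub_pos.2 hl) hu) hx)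

theorem praPl_outside_interval_general
    {Θ : Type*} [Fintype Θ] (l u : Θ → ℝ)
    (hl : ∀ x, 0 ≤ l x) (hlu : ∀ x, l x ≤ u x)
    (hlsum : ∑ x : Θ, l x < 1)
    (x : Θ) (hx : l x = u x) (hxpos : 0 < u x) :
    praPl l u x > u x ∧
    ¬ (∀ y, l y ≤ praPl l u y ∧ praPl l u y ≤ u y) := by
  have hsum : 0 < ∑ y, u y :=
    sum_pos' (fun y _ => (hl y).trans (hlu y)) ⟨x, mem_univ x, hxpos⟩
  have hgt : u x < praPl l u x := hx ▸ lt_praPl hlsum hsum hxpos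
  exact ⟨hgt, fun h => (h x).2.not_gt hgt⟩

/-- if `l(x) = u(x) > 0` for some `x` and `∑ l < 1`, then
`PraPl[(l,u)](x) > u(x)`, so `PraPl[(l,u)]` falls outside the interval system
`P(l,u) = {p : l ≤ p ≤ u}`. -/
theorem praPl_outside_interval
    {Θ : Type*} [Fintype Θ] [Nonempty Θ] (l u : Θ → ℝ)
    (hl : ∀ x, 0 ≤ l x) (hlu : ∀ x, l x ≤ u x)
    (hlsum : ∑ x : Θ, l x < 1)
    (x : Θ) (hx : l x = u x) (hxpos : 0 < u x) :
    praPl l u x > u x ∧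
    ¬ (∀ y, l y ≤ praPl l u y ∧ praPl l u y ≤ u y) :=
  praPl_outside_interval_general l u hl hlu hlsum x hx hxpos
end

section
/- Let m be a basic probability assignment on a finite nonempty set Θ which is not Bayesian, i.e., there exists A ⊆ Θ with |A| ≥ 2 and m(A) > 0. If there exists x ∈ Θ with m(x) = Pl(x) > 0, then the relative belief of singletons satisfies m(x)/k_Bel > Pl(x) and the relative plausibility of singletons satisfies Pl(x)/k_Pl < Bel({x}) = m(x); in particular both fall outside the probability interval [Bel(x), Pl(x)] for x. -/
open Finset

/-- A basic probability assignment on a finite set `Θ`. -/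
def IsBPA {Θ : Type*} [Fintype Θ] (m : Finset Θ → ℝ) : Prop :=
  m ∅ = 0 ∧ (∀ A, 0 ≤ m A) ∧ (∑ A : Finset Θ, m A) = 1

/-- Belief function `Bel(A) = ∑_{B ⊆ A} m(B)`. -/
noncomputable def Bel {Θ : Type*} [Fintype Θ] [DecidableEq Θ] (m : Finset Θ → ℝ)
    (A : Finset Θ) : ℝ :=
  ∑ B ∈ A.powerset, m B

/-- Plausibility function `Pl(A) = ∑_{B ∩ A ≠ ∅} m(B)`. -/
noncomputable def Pl {Θ : Type*} [Fintype Θ] [DecidableEq Θ] (m : Finset Θ → ℝ)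
    (A : Finset Θ) : ℝ :=
  ∑ B ∈ Finset.univ.filter (fun B => B ∩ A ≠ ∅), m B

/-- Total mass of singletons `k_Bel`. -/
noncomputable def kBel {Θ : Type*} [Fintype Θ] (m : Finset Θ → ℝ) : ℝ :=
  ∑ x : Θ, m {x}

/-- Total plausibility of singletons `k_Pl`. -/
noncomputable def kPl {Θ : Type*} [Fintype Θ] [DecidableEq Θ] (m : Finset Θ → ℝ) : ℝ :=
  ∑ x : Θ, Pl m {x}

/-- `β[Bel] = (1 - k_Bel)/(k_Pl - k_Bel)`. -/
noncomputable def betaBel {Θ : Type*} [Fintype Θ] [DecidableEq Θ] (m : Finset Θ → ℝ) : ℝ :=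
  (1 - kBel m) / (kPl m - kBel m)

/-- The intersection probability `p[Bel](x) = m(x) + β[Bel]⬝(Pl(x) - m(x))`. -/
noncomputable def pInt {Θ : Type*} [Fintype Θ] [DecidableEq Θ] (m : Finset Θ → ℝ)
    (x : Θ) : ℝ :=
  m {x} + betaBel m * (Pl m {x} - m {x})

/-!
Counting each focal element `B` once for every point it contains gives `k_Pl = ∑_B |B| m(B)`,
whereas `k_Bel` counts only the singleton focal elements. A focal element with at least two points
therefore pushes `k_Bel` strictly below `1 = ∑_B m(B)` and `k_Pl` strictly above it. Since
`m(x) = Pl(x) > 0`, both relative values are `m(x)` divided by these constants, so the first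
exceeds `m(x) = Pl(x)` and the second falls below `m(x) = Bel(x)`.
-/

section

variable {Θ : Type*} [Fintype Θ] (m : Finset Θ → ℝ)

theorem single_le_kBel (hm : ∀ A, 0 ≤ m A) (x : Θ) : m {x} ≤ kBel m :=
  Finset.single_le_sum (f := fun y => m {y}) (fun y _ => hm {y}) (Finset.mem_univ x)

variable [DecidableEq Θ]

theorem Bel_singleton (hm₀ : m ∅ = 0) (x : Θ) : Bel m {x} = m {x} := by
  have hpowerset : ({x} : Finset Θ).powerset = {∅, {x}} := by
    ext B
    simp [Finset.subset_singleton_iff]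
  rw [Bel, hpowerset, Finset.sum_pair (Finset.singleton_ne_empty x).symm, hm₀, zero_add]

theorem Pl_singleton (y : Θ) : Pl m {y} = ∑ B with y ∈ B, m B := by
  rw [Pl]
  congr 1
  ext B
  simp [Finset.eq_empty_iff_forall_notMem]

theorem kPl_eq_sum_card_mul : kPl m = ∑ B, (B.card : ℝ) * m B := by
  simp only [kPl, Pl_singleton]
  rw [Finset.sum_comm' (t' := Finset.univ) (s' := fun B => B) (by simp)]
  simp

theorem IsBPA.kBel_add_le {m : Finset Θ → ℝ} (hm : IsBPA m) {A : Finset Θ} (hA : A.card ≠ 1) :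
    kBel m + m A ≤ 1 := by
  let singletons : Finset (Finset Θ) := Finset.univ.map ⟨({·}), Finset.singleton_injective⟩
  have hA_not_mem : A ∉ singletons := by
    simp only [singletons, Finset.mem_map, Finset.mem_univ, true_and]
    rintro ⟨y, rfl⟩
    exact hA (Finset.card_singleton y)
  calc kBel m + m A = ∑ B ∈ insert A singletons, m B := by
        rw [Finset.sum_insert hA_not_mem, Finset.sum_map, add_comm]; rfl
    _ ≤ ∑ B, m B := Finset.sum_le_univ_sum_of_nonneg hm.2.1
    _ = 1 := hm.2.2

theorem IsBPA.one_add_le_kPl {m : Finset Θ → ℝ} (hm : IsBPA m) (A : Finset Θ) :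
    1 + ((A.card : ℝ) - 1) * m A ≤ kPl m := by
  have hterm : ∀ B : Finset Θ, 0 ≤ ((B.card : ℝ) - 1) * m B := by
    intro B
    rcases B.eq_empty_or_nonempty with rfl | hB
    · simp [hm.1]
    · exact mul_nonneg (sub_nonneg.2 (by exact_mod_cast hB.card_pos)) (hm.2.1 B)
  calc 1 + ((A.card : ℝ) - 1) * m A ≤ 1 + ∑ B, ((B.card : ℝ) - 1) * m B := by
        gcongr
        exact Finset.single_le_sum (fun B _ => hterm B) (Finset.mem_univ A)
    _ = kPl m := by
        rw [kPl_eq_sum_card_mul]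
        simp only [sub_mul, one_mul, Finset.sum_sub_distrib, hm.2.2]
        ring

end

theorem relBel_relPl_outside_interval_general
    {Θ : Type*} [Fintype Θ] [DecidableEq Θ] (m : Finset Θ → ℝ)
    (hm : IsBPA m)
    (hnonBayes : ∃ A : Finset Θ, 2 ≤ A.card ∧ 0 < m A)
    (x : Θ) (hx : m {x} = Pl m {x}) (hxpos : 0 < m {x}) :
    m {x} / kBel m > Pl m {x} ∧ Pl m {x} / kPl m < Bel m {x} ∧ Bel m {x} = m {x} := by
  obtain ⟨A, hA, hmA⟩ := hnonBayes
  have hkBel_lt : kBel m < 1 := by linarith [hm.kBel_add_le (A := A) (by omega)]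
  have hkBel_pos : 0 < kBel m := hxpos.trans_le (single_le_kBel m hm.2.1 x)
  have hkPl_gt : 1 < kPl m := by
    have hA' : (2 : ℝ) ≤ A.card := by exact_mod_cast hA
    nlinarith [hm.one_add_le_kPl A]
  rw [← hx, Bel_singleton m hm.1]
  exact ⟨(lt_div_iff₀ hkBel_pos).2 (mul_lt_of_lt_one_right hxpos hkBel_lt),
    div_lt_self hxpos hkPl_gt, rfl⟩

/-- for a non-Bayesian BPA `m`, if `m(x) = Pl(x) > 0` for some singleton `x`,
then the relative belief of singletons exceeds `Pl(x)` and the relative plausibility of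
singletons is below `Bel({x}) = m(x)`: both fall outside the interval `[Bel(x), Pl(x)]`. -/
theorem relBel_relPl_outside_interval
    {Θ : Type*} [Fintype Θ] [DecidableEq Θ] [Nonempty Θ] (m : Finset Θ → ℝ)
    (hm : IsBPA m)
    (hnonBayes : ∃ A : Finset Θ, 2 ≤ A.card ∧ 0 < m A)
    (x : Θ) (hx : m {x} = Pl m {x}) (hxpos : 0 < m {x}) :
    m {x} / kBel m > Pl m {x} ∧ Pl m {x} / kPl m < Bel m {x} ∧ Bel m {x} = m {x} :=
  relBel_relPl_outside_interval_general m hm hnonBayes x hx hxpos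
end

section
/- Let m, m₁, m₂ be basic probability assignments on a finite nonempty set Θ, and α₁, α₂ ≥ 0 with α₁ + α₂ = 1. Assume the Dempster normalization factors k(m,m₁) and k(m,m₂) are strictly positive, where k(m,m') = 1 − ∑_{B∩C=∅} m(B)m'(C). Then for every nonempty A ⊆ Θ, the Dempster combination of m with the affine combination satisfies (m ⊕ (α₁m₁ + α₂m₂))(A) = γ₁·(m ⊕ m₁)(A) + γ₂·(m ⊕ m₂)(A), where γᵢ = αᵢ·k(m,mᵢ) / (α₁·k(m,m₁) + α₂·k(m,m₂)). -/
open Finset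

/-- Conjunctive combination of masses: `(m₁ ⍉ m₂)(A) = ∑_{B ∩ C = A} m₁(B)m₂(C)`. -/
noncomputable def conjComb {Θ : Type*} [Fintype Θ] [DecidableEq Θ]
    (m₁ m₂ : Finset Θ → ℝ) (A : Finset Θ) : ℝ :=
  ∑ p ∈ Finset.univ.filter (fun p : Finset Θ × Finset Θ => p.1 ∩ p.2 = A), m₁ p.1 * m₂ p.2

/-- Dempster normalisation factor `k(m₁,m₂) = 1 - ∑_{B ∩ C = ∅} m₁(B)m₂(C)`. -/
noncomputable def dempsterK {Θ : Type*} [Fintype Θ] [DecidableEq Θ]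
    (m₁ m₂ : Finset Θ → ℝ) : ℝ :=
  1 - conjComb m₁ m₂ ∅

/-- Dempster combination `(m₁ ⊕ m₂)(A) = (∑_{B ∩ C = A} m₁(B)m₂(C)) / k(m₁,m₂)`
for nonempty `A`, and `(m₁ ⊕ m₂)(∅) = 0`. -/
noncomputable def dempster {Θ : Type*} [Fintype Θ] [DecidableEq Θ]
    (m₁ m₂ : Finset Θ → ℝ) (A : Finset Θ) : ℝ :=
  if A = ∅ then 0 else conjComb m₁ m₂ A / dempsterK m₁ m₂


lemma conjComb_affine {Θ : Type*} [Fintype Θ] [DecidableEq Θ]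
    (m m₁ m₂ : Finset Θ → ℝ) (a b : ℝ) (A : Finset Θ) :
    conjComb m (fun C => a * m₁ C + b * m₂ C) A =
      a * conjComb m m₁ A + b * conjComb m m₂ A := by
  unfold conjComb
  rw [Finset.mul_sum, Finset.mul_sum, ← Finset.sum_add_distrib]
  exact Finset.sum_congr rfl (fun p _ => by ring)

/-- Proposition 1: Dempster combination of a BPA with an affine combination
of two BPAs is the corresponding weighted combination of the separate Dempster sums. -/
theorem dempster_affine_combination
    {Θ : Type*} [Fintype Θ] [DecidableEq Θ] [Nonempty Θ]
    (m m₁ m₂ : Finset Θ → ℝ) (hm : IsBPA m) (hm₁ : IsBPA m₁) (hm₂ : IsBPA m₂)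
    (α₁ α₂ : ℝ) (hα₁ : 0 ≤ α₁) (hα₂ : 0 ≤ α₂) (hα : α₁ + α₂ = 1)
    (hk₁ : 0 < dempsterK m m₁) (hk₂ : 0 < dempsterK m m₂)
    (A : Finset Θ) (hA : A ≠ ∅) :
    dempster m (fun C => α₁ * m₁ C + α₂ * m₂ C) A =
      (α₁ * dempsterK m m₁ / (α₁ * dempsterK m m₁ + α₂ * dempsterK m m₂)) *
          dempster m m₁ A +
        (α₂ * dempsterK m m₂ / (α₁ * dempsterK m m₁ + α₂ * dempsterK m m₂)) *
          dempster m m₂ A := by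
  have hS : 0 < α₁ * dempsterK m m₁ + α₂ * dempsterK m m₂ := by
    rcases lt_or_eq_of_le hα₁ with h | h
    · have : 0 ≤ α₂ * dempsterK m m₂ := mul_nonneg hα₂ hk₂.le
      nlinarith
    · have hα₂' : α₂ = 1 := by linarith
      rw [← h, hα₂']; simpa using hk₂
  have hKaff : dempsterK m (fun C => α₁ * m₁ C + α₂ * m₂ C) =
      α₁ * dempsterK m m₁ + α₂ * dempsterK m m₂ := by
    unfold dempsterK
    rw [conjComb_affine]
    unfold dempsterK at *
    ring_nf
    nlinarith [hα]
  unfold dempster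
  rw [if_neg hA, if_neg hA, if_neg hA, conjComb_affine, hKaff]
  field_simp
end

section
/- Let m be a basic probability assignment on a finite nonempty set Θ with plausibility function Pl, and let μ : 2^Θ → ℝ be the Möbius inverse of Pl, defined by μ(A) = ∑_{B⊆A} (−1)^{|A∖B|}·Pl(B). Then for every x ∈ Θ, ∑_{A⊆Θ : x∈A} μ(A) = m({x}). -/
open Finset

/-- Basic plausibility assignment: Möbius inverse of `Pl`,
`μ(A) = ∑_{B ⊆ A} (-1)^{|A ∖ B|} Pl(B)`. -/
noncomputable def bplA {Θ : Type*} [Fintype Θ] [DecidableEq Θ] (m : Finset Θ → ℝ)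
    (A : Finset Θ) : ℝ :=
  ∑ B ∈ A.powerset, (-1 : ℝ) ^ (A \ B).card * Pl m B

lemma aux_supersets {Θ : Type*} [Fintype Θ] [DecidableEq Θ] (D : Finset Θ) :
    ∑ A ∈ Finset.univ.filter (fun A : Finset Θ => D ⊆ A), (-1:ℝ)^(A\D).card
      = if D = Finset.univ then 1 else 0 := by
  have h := Finset.sum_nbij' (i := fun A : Finset Θ => A \ D) (j := fun C : Finset Θ => D ∪ C)
    (s := Finset.univ.filter (fun A : Finset Θ => D ⊆ A))
    (t := (Finset.univ \ D).powerset)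
    (f := fun A : Finset Θ => (-1:ℝ)^(A\D).card)
    (g := fun C : Finset Θ => (-1:ℝ)^C.card)
    (by intro A hA; simp only [mem_filter, mem_powerset] at *
        exact sdiff_subset_sdiff (subset_univ A) le_rfl)
    (by intro C hC; simp only [mem_filter, mem_powerset] at *
        exact ⟨mem_univ _, subset_union_left⟩)
    (by intro A hA; simp only [mem_filter] at hA
        exact union_sdiff_of_subset hA.2)
    (by intro C hC; simp only [mem_powerset] at hC
        have : Disjoint C D := by
          intro s hsC hsD
          intro a ha
          have := hC (hsC ha)
          simp only [mem_sdiff] at this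
          exact absurd (hsD ha) this.2
        rw [union_sdiff_cancel_left this.symm])
    (by intro A hA; rfl)
  rw [h]
  have h2 : ∑ C ∈ (Finset.univ \ D).powerset, (-1:ℝ)^C.card
      = ((∑ C ∈ (Finset.univ \ D).powerset, (-1:ℤ)^C.card : ℤ) : ℝ) := by
    push_cast; rfl
  rw [h2, Finset.sum_powerset_neg_one_pow_card]
  have h3 : Finset.univ \ D = ∅ ↔ D = Finset.univ := by
    rw [sdiff_eq_empty_iff_subset]
    exact ⟨fun h => le_antisymm (subset_univ D) h, fun h => h ▸ le_rfl⟩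
  by_cases hD : D = Finset.univ <;> simp [hD, h3]

lemma coeff_sum {Θ : Type*} [Fintype Θ] [DecidableEq Θ] (x : Θ) (B : Finset Θ) :
    ∑ A ∈ Finset.univ.filter (fun A : Finset Θ => x ∈ A ∧ B ⊆ A), (-1:ℝ)^(A\B).card
      = (if B = Finset.univ then 1 else 0)
        - (if B = Finset.univ.erase x then 1 else 0) := by
  by_cases hx : x ∈ B
  · have hfe : Finset.univ.filter (fun A : Finset Θ => x ∈ A ∧ B ⊆ A)
        = Finset.univ.filter (fun A : Finset Θ => B ⊆ A) := by
      apply filter_congr; intro A _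
      exact ⟨fun h => h.2, fun h => ⟨h hx, h⟩⟩
    have hne : B ≠ Finset.univ.erase x := by
      intro h; rw [h] at hx; exact (Finset.notMem_erase x _) hx
    rw [hfe, aux_supersets, if_neg hne, sub_zero]
  · have hfe : Finset.univ.filter (fun A : Finset Θ => x ∈ A ∧ B ⊆ A)
        = Finset.univ.filter (fun A : Finset Θ => insert x B ⊆ A) := by
      apply filter_congr; intro A _
      exact Finset.insert_subset_iff.symm
    have hcard : ∀ A ∈ Finset.univ.filter (fun A : Finset Θ => insert x B ⊆ A),
        (-1:ℝ)^(A\B).card = -(-1:ℝ)^(A\insert x B).card := by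
      intro A hA
      simp only [mem_filter, Finset.insert_subset_iff] at hA
      have hxAB : x ∈ A \ B := mem_sdiff.2 ⟨hA.2.1, hx⟩
      have : A \ insert x B = (A \ B).erase x := Finset.sdiff_insert A B x
      have hpos : 0 < (A \ B).card := Finset.card_pos.2 ⟨x, hxAB⟩
      obtain ⟨k, hk⟩ := Nat.exists_eq_succ_of_ne_zero hpos.ne'
      rw [this, Finset.card_erase_of_mem hxAB, hk]
      simp [pow_succ]
    have hBu : B ≠ Finset.univ := fun h => hx (h ▸ mem_univ x)
    rw [hfe, Finset.sum_congr rfl hcard, Finset.sum_neg_distrib, aux_supersets,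
      if_neg hBu]
    have hiff : insert x B = Finset.univ ↔ B = Finset.univ.erase x := by
      constructor
      · intro h
        rw [← h, Finset.erase_insert hx]
      · intro h
        rw [h, Finset.insert_erase (mem_univ x)]
    by_cases hB : B = Finset.univ.erase x <;>
      simp [hB, hiff, hiff.not]

/-- for the Möbius inverse `μ` of the plausibility function,
`∑_{A ∋ x} μ(A) = m({x})` for every singleton `x`. -/
theorem sum_bplA_over_supsets_eq_mass
    {Θ : Type*} [Fintype Θ] [DecidableEq Θ] [Nonempty Θ]
    (m : Finset Θ → ℝ) (hm : IsBPA m) (x : Θ) :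
    ∑ A ∈ Finset.univ.filter (fun A : Finset Θ => x ∈ A), bplA m A = m {x} := by
  obtain ⟨h0, hnn, h1⟩ := hm
  simp only [bplA]
  have hpow : ∀ A : Finset Θ, A.powerset = Finset.univ.filter (fun B => B ⊆ A) := by
    intro A; ext B; simp
  have step1 : ∑ A ∈ Finset.univ.filter (fun A : Finset Θ => x ∈ A),
      (∑ B ∈ A.powerset, (-1 : ℝ) ^ (A \ B).card * Pl m B)
      = ∑ B : Finset Θ, ∑ A ∈ Finset.univ.filter (fun A : Finset Θ => x ∈ A ∧ B ⊆ A),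
          (-1 : ℝ) ^ (A \ B).card * Pl m B := by
    calc ∑ A ∈ Finset.univ.filter (fun A : Finset Θ => x ∈ A),
          (∑ B ∈ A.powerset, (-1 : ℝ) ^ (A \ B).card * Pl m B)
        = ∑ A : Finset Θ, ∑ B : Finset Θ,
            (if x ∈ A ∧ B ⊆ A then (-1 : ℝ) ^ (A \ B).card * Pl m B else 0) := by
          rw [Finset.sum_filter]
          refine Finset.sum_congr rfl fun A _ => ?_
          by_cases h : x ∈ A
          · simp [h, hpow A, Finset.sum_filter]
          · simp [h]
      _ = ∑ B : Finset Θ, ∑ A : Finset Θ,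
            (if x ∈ A ∧ B ⊆ A then (-1 : ℝ) ^ (A \ B).card * Pl m B else 0) :=
          Finset.sum_comm
      _ = _ := by
          refine Finset.sum_congr rfl fun B _ => (Finset.sum_filter _ _).symm
  rw [step1]
  have step2 : ∀ B : Finset Θ,
      ∑ A ∈ Finset.univ.filter (fun A : Finset Θ => x ∈ A ∧ B ⊆ A),
          (-1 : ℝ) ^ (A \ B).card * Pl m B
      = ((if B = Finset.univ then 1 else 0)
          - (if B = Finset.univ.erase x then 1 else 0)) * Pl m B := by
    intro B
    rw [← Finset.sum_mul, coeff_sum]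
  rw [Finset.sum_congr rfl (fun B _ => step2 B)]
  have hxu : (Finset.univ : Finset Θ) ≠ Finset.univ.erase x := by
    intro h
    have := Finset.notMem_erase x (Finset.univ : Finset Θ)
    rw [← h] at this
    exact this (mem_univ x)
  have step3 : ∑ B : Finset Θ, ((if B = Finset.univ then 1 else 0)
          - (if B = Finset.univ.erase x then 1 else 0)) * Pl m B
      = Pl m Finset.univ - Pl m (Finset.univ.erase x) := by
    simp only [sub_mul, one_mul, zero_mul, Finset.sum_sub_distrib, ite_mul]
    rw [Finset.sum_ite_eq' Finset.univ, Finset.sum_ite_eq' Finset.univ]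
    simp
  rw [step3]
  -- now compute the two plausibilities
  have hPlu : Pl m Finset.univ = 1 - m ∅ := by
    unfold Pl
    have : Finset.univ.filter (fun B : Finset Θ => B ∩ Finset.univ ≠ ∅)
        = Finset.univ.filter (fun B : Finset Θ => ¬ B = ∅) := by
      apply filter_congr; intro B _; simp
    rw [this, Finset.sum_filter]
    have h2 : ∀ B : Finset Θ, (if ¬ B = ∅ then m B else 0) = m B - (if B = ∅ then m B else 0) := by
      intro B; by_cases h : B = ∅ <;> simp [h]
    rw [Finset.sum_congr rfl (fun B _ => h2 B), Finset.sum_sub_distrib, h1]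
    congr 1
    simp
  have hPle : Pl m (Finset.univ.erase x) = 1 - m ∅ - m {x} := by
    unfold Pl
    have hsplit := Finset.sum_filter_add_sum_filter_not Finset.univ
      (fun B : Finset Θ => B ∩ Finset.univ.erase x ≠ ∅) m
    have hfilter : Finset.univ.filter (fun B : Finset Θ => ¬ B ∩ Finset.univ.erase x ≠ ∅)
        = ({∅, {x}} : Finset (Finset Θ)) := by
      ext B
      simp only [Finset.mem_filter, Finset.mem_univ, true_and, not_not,
        Finset.mem_insert, Finset.mem_singleton]
      rw [← Finset.subset_singleton_iff]
      constructor
      · intro h a ha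
        by_contra hax
        have : a ∈ B ∩ Finset.univ.erase x :=
          Finset.mem_inter.2 ⟨ha, Finset.mem_erase.2 ⟨fun he => hax (by simp [he]), mem_univ a⟩⟩
        rw [h] at this
        exact absurd this (Finset.notMem_empty a)
      · intro h
        rw [Finset.eq_empty_iff_forall_notMem]
        intro a ha
        rw [Finset.mem_inter, Finset.mem_erase] at ha
        exact ha.2.1 (Finset.mem_singleton.1 (h ha.1))
    have hne : (∅ : Finset Θ) ≠ {x} := (Finset.singleton_ne_empty x).symm
    have hnegsum : ∑ B ∈ Finset.univ.filter
        (fun B : Finset Θ => ¬ B ∩ Finset.univ.erase x ≠ ∅), m B = m ∅ + m {x} := by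
      rw [hfilter, Finset.sum_pair hne]
    rw [hnegsum, h1] at hsplit
    linarith
  rw [hPlu, hPle, h0]
  ring
end

section
/- Let m be a basic probability assignment on a finite nonempty set Θ. Then the set T¹[Bel] = {p' : Θ → ℝ : ∑_{x∈Θ} p'(x) = 1 and p'(x) ≥ m(x) for all x ∈ Θ} equals the convex hull in the real vector space ℝ^Θ of the finite set of points {t¹_x : x ∈ Θ}, where t¹_x(x) = m(x) + 1 − k_Bel and t¹_x(y) = m(y) for y ≠ x. -/
open Finset

/-- Vertex `t¹_x` of the lower simplex: `t¹_x(x) = m(x) + 1 - k_Bel`, `t¹_x(y) = m(y)`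
for `y ≠ x`. -/
noncomputable def lowerVertex {Θ : Type*} [Fintype Θ] [DecidableEq Θ]
    (m : Finset Θ → ℝ) (x : Θ) : Θ → ℝ :=
  fun y => if y = x then m {y} + 1 - kBel m else m {y}

lemma kBel_le_one {Θ : Type*} [Fintype Θ] [DecidableEq Θ]
    (m : Finset Θ → ℝ) (hm : IsBPA m) : kBel m ≤ 1 := by
  have h1 : kBel m = ∑ A ∈ Finset.univ.image (fun x : Θ => ({x} : Finset Θ)), m A := by
    rw [Finset.sum_image (fun a _ b _ h => Finset.singleton_injective h)]
    rfl
  rw [h1]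
  calc ∑ A ∈ Finset.univ.image (fun x : Θ => ({x} : Finset Θ)), m A
      ≤ ∑ A : Finset Θ, m A :=
        Finset.sum_le_sum_of_subset_of_nonneg (Finset.subset_univ _)
          (fun A _ _ => hm.2.1 A)
    _ = 1 := hm.2.2

/-- lower half of Theorem 2: the lower simplex
`T¹[Bel] = {p' : ∑ p' = 1, p'(x) ≥ m(x) ∀x}` is the convex hull of the
vertices `t¹_x`, `x ∈ Θ`. -/
theorem lowerSimplex_eq_convexHull
    {Θ : Type*} [Fintype Θ] [DecidableEq Θ] [Nonempty Θ]
    (m : Finset Θ → ℝ) (hm : IsBPA m) :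
    {p' : Θ → ℝ | (∑ x : Θ, p' x) = 1 ∧ ∀ x : Θ, m {x} ≤ p' x} =
      convexHull ℝ (Set.range (lowerVertex m)) := by
  have hk : kBel m ≤ 1 := kBel_le_one m hm
  have hvsum : ∀ x : Θ, (∑ y : Θ, lowerVertex m x y) = 1 := by
    intro x
    have : (∑ y : Θ, lowerVertex m x y)
        = ∑ y : Θ, (m {y} + if y = x then 1 - kBel m else 0) := by
      apply Finset.sum_congr rfl
      intro y _
      by_cases h : y = x <;> simp [lowerVertex, h] <;> ring
    rw [this, Finset.sum_add_distrib]
    simp [kBel]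
  have hvmem : ∀ x : Θ,
      lowerVertex m x ∈ {p' : Θ → ℝ | (∑ x : Θ, p' x) = 1 ∧ ∀ x : Θ, m {x} ≤ p' x} := by
    intro x
    refine ⟨hvsum x, fun y => ?_⟩
    unfold lowerVertex
    by_cases h : y = x <;> simp [h] <;> linarith
  ext p
  constructor
  · rintro ⟨hsum, hge⟩
    by_cases hk1 : kBel m = 1
    · -- degenerate case: p = lowerVertex m x₀ for any x₀
      have hz : ∀ x : Θ, p x = m {x} := by
        have h0 : (∑ x : Θ, (p x - m {x})) = 0 := by
          rw [Finset.sum_sub_distrib, hsum]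
          have : kBel m = ∑ x : Θ, m {x} := rfl
          linarith [this ▸ hk1]
        intro x
        have := (Finset.sum_eq_zero_iff_of_nonneg
          (fun y _ => sub_nonneg.mpr (hge y))).mp h0 x (Finset.mem_univ x)
        linarith
      obtain ⟨x₀⟩ := ‹Nonempty Θ›
      apply subset_convexHull ℝ _
      refine ⟨x₀, ?_⟩
      funext y
      by_cases h : y = x₀
      · subst h; simp [lowerVertex, hz]; linarith
      · simp [lowerVertex, h, hz]
    · have hkpos : 0 < 1 - kBel m := lt_of_le_of_ne (by linarith) (by intro h; apply hk1; linarith)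
      set w : Θ → ℝ := fun x => (p x - m {x}) / (1 - kBel m) with hw
      have hw0 : ∀ x : Θ, 0 ≤ w x := fun x =>
        div_nonneg (sub_nonneg.mpr (hge x)) hkpos.le
      have hwsum : (∑ x : Θ, w x) = 1 := by
        rw [← Finset.sum_div, Finset.sum_sub_distrib, hsum]
        have : kBel m = ∑ x : Θ, m {x} := rfl
        rw [← this]
        field_simp
      have := Finset.centerMass_mem_convexHull (s := Set.range (lowerVertex m))
        Finset.univ (fun i _ => hw0 i)
        (by rw [hwsum]; norm_num)
        (fun i _ => Set.mem_range_self (f := lowerVertex m) i)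
      rwa [Finset.centerMass_eq_of_sum_1 _ _ hwsum,
        show (∑ i : Θ, w i • lowerVertex m i) = p from ?_] at this
      funext y
      have hexp : (∑ i : Θ, w i • lowerVertex m i) y
          = ∑ i : Θ, w i * lowerVertex m i y := by
        simp [Finset.sum_apply]
      rw [hexp]
      have : ∀ i : Θ, w i * lowerVertex m i y
          = w i * m {y} + (if i = y then w i * (1 - kBel m) else 0) := by
        intro i
        unfold lowerVertex
        by_cases h : i = y
        · subst h; simp; ring
        · have h' : ¬ y = i := fun hc => h hc.symm
          simp [h, h']
      rw [Finset.sum_congr rfl (fun i _ => this i), Finset.sum_add_distrib,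
        ← Finset.sum_mul, hwsum, Finset.sum_ite_eq' Finset.univ y]
      simp [hw]
      field_simp
      ring
  · intro hp
    have hconv : Convex ℝ {p' : Θ → ℝ | (∑ x : Θ, p' x) = 1 ∧ ∀ x : Θ, m {x} ≤ p' x} := by
      rintro a ⟨ha1, ha2⟩ b ⟨hb1, hb2⟩ s t hs ht hst
      constructor
      · have : (∑ x : Θ, (s • a + t • b) x) = s * (∑ x : Θ, a x) + t * (∑ x : Θ, b x) := by
          rw [Finset.mul_sum, Finset.mul_sum, ← Finset.sum_add_distrib]
          apply Finset.sum_congr rfl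
          intro x _
          simp [Pi.add_apply]
        rw [this, ha1, hb1]; linarith
      · intro x
        have := ha2 x
        have := hb2 x
        have hmx : m {x} = s * m {x} + t * m {x} := by rw [← add_mul, hst, one_mul]
        calc m {x} = s * m {x} + t * m {x} := hmx
          _ ≤ s * a x + t * b x := by
              apply add_le_add <;> apply mul_le_mul_of_nonneg_left <;> first | assumption
          _ = (s • a + t • b) x := by simp
    exact convexHull_min (Set.range_subset_iff.mpr hvmem) hconv hp
end

section
/- Let m be a basic probability assignment on a finite set Θ of cardinality n with belief function Bel. Then the credal set P[Bel] = {p : Θ → ℝ : p(x) ≥ 0 ∀x, ∑_{x∈Θ} p(x) = 1, and ∑_{x∈A} p(x) ≥ Bel(A) for all A ⊆ Θ} equals the convex hull of the points P^ρ, indexed by the bijections ρ : {1,…,n} → Θ, where for each i the vertex is P^ρ(ρ(i)) = ∑ { m(A) : A ⊆ Θ, ρ(i) ∈ A, and ρ(j) ∉ A for all j < i }. -/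
open Finset

/-- The vertex `P^ρ` of the credal set associated with an ordering (bijection)
`ρ : Fin n ≃ Θ` of the singletons: `P^ρ(ρ(i)) = ∑ {m(A) : ρ(i) ∈ A, ρ(j) ∉ A ∀ j < i}`. -/
noncomputable def permVertex {Θ : Type*} [Fintype Θ] [DecidableEq Θ]
    (m : Finset Θ → ℝ) (ρ : Fin (Fintype.card Θ) ≃ Θ) : Θ → ℝ :=
  fun y => ∑ A ∈ Finset.univ.filter
      (fun A : Finset Θ =>
        y ∈ A ∧ ∀ j : Fin (Fintype.card Θ), j < ρ.symm y → ρ j ∉ A), m A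

section Aux
set_option linter.unusedSectionVars false
variable {Θ : Type*} [Fintype Θ] [DecidableEq Θ]

lemma first_unique (ρ : Fin (Fintype.card Θ) ≃ Θ) {A : Finset Θ} {x y : Θ}
    (hx : x ∈ A ∧ ∀ j : Fin (Fintype.card Θ), j < ρ.symm x → ρ j ∉ A)
    (hy : y ∈ A ∧ ∀ j : Fin (Fintype.card Θ), j < ρ.symm y → ρ j ∉ A) : x = y := by
  rcases lt_trichotomy (ρ.symm x) (ρ.symm y) with h | h | h
  · exact (hy.2 _ h (by simpa using hx.1)).elim
  · exact ρ.symm.injective h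
  · exact (hx.2 _ h (by simpa using hy.1)).elim

lemma exists_first (ρ : Fin (Fintype.card Θ) ≃ Θ) {A : Finset Θ} (hA : A.Nonempty) :
    ∃ x, x ∈ A ∧ ∀ j : Fin (Fintype.card Θ), j < ρ.symm x → ρ j ∉ A := by
  obtain ⟨a, ha, hae⟩ := Finset.mem_image.mp ((A.image (fun a => ρ.symm a)).min'_mem (hA.image _))
  refine ⟨a, ha, fun j hj hjA => ?_⟩
  have h1 : (A.image (fun a => ρ.symm a)).min' (hA.image _) ≤ ρ.symm (ρ j) :=
    Finset.min'_le _ _ (Finset.mem_image_of_mem _ hjA)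
  rw [← hae, Equiv.symm_apply_apply] at h1
  exact absurd h1 (not_le.mpr hj)

lemma sum_permVertex_eq (m : Finset Θ → ℝ) (ρ : Fin (Fintype.card Θ) ≃ Θ)
    (T : Finset Θ) :
    ∑ x ∈ T, permVertex m ρ x =
      ∑ A ∈ univ.filter (fun A : Finset Θ =>
        ∃ x ∈ T, x ∈ A ∧ ∀ j : Fin (Fintype.card Θ), j < ρ.symm x → ρ j ∉ A), m A := by
  have h1 : ∀ x ∈ T, permVertex m ρ x =
      ∑ A : Finset Θ, if (x ∈ A ∧ ∀ j : Fin (Fintype.card Θ), j < ρ.symm x → ρ j ∉ A)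
        then m A else 0 := by
    intro x _
    rw [permVertex, Finset.sum_filter]
  rw [Finset.sum_congr rfl h1, Finset.sum_comm, Finset.sum_filter]
  refine Finset.sum_congr rfl (fun A _ => ?_)
  rw [← Finset.sum_filter]
  by_cases h : ∃ x ∈ T, x ∈ A ∧ ∀ j : Fin (Fintype.card Θ), j < ρ.symm x → ρ j ∉ A
  · obtain ⟨x0, hx0T, hx0⟩ := h
    have hs : T.filter (fun x => x ∈ A ∧ ∀ j : Fin (Fintype.card Θ),
        j < ρ.symm x → ρ j ∉ A) = {x0} := by
      ext y
      simp only [mem_filter, mem_singleton]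
      constructor
      · rintro ⟨_, hy⟩; exact first_unique ρ hy hx0
      · rintro rfl; exact ⟨hx0T, hx0⟩
    rw [hs, if_pos ⟨x0, hx0T, hx0⟩, Finset.sum_singleton]
  · have hs : T.filter (fun x => x ∈ A ∧ ∀ j : Fin (Fintype.card Θ),
        j < ρ.symm x → ρ j ∉ A) = ∅ := by
      rw [Finset.filter_eq_empty_iff]
      intro x hx hxA
      exact h ⟨x, hx, hxA⟩
    rw [hs, if_neg h, Finset.sum_empty]

lemma permVertex_nonneg {m : Finset Θ → ℝ} (hm : ∀ A, 0 ≤ m A)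
    (ρ : Fin (Fintype.card Θ) ≃ Θ) (y : Θ) : 0 ≤ permVertex m ρ y :=
  Finset.sum_nonneg fun A _ => hm A

lemma Bel_le_sum_permVertex {m : Finset Θ → ℝ} (hm0 : m ∅ = 0) (hm : ∀ A, 0 ≤ m A)
    (ρ : Fin (Fintype.card Θ) ≃ Θ) (T : Finset Θ) :
    Bel m T ≤ ∑ x ∈ T, permVertex m ρ x := by
  rw [sum_permVertex_eq, Bel]
  have h1 : ∑ B ∈ T.powerset, m B = ∑ B ∈ T.powerset.filter (fun B => B.Nonempty), m B :=
    (Finset.sum_filter_of_ne (fun B _ hB =>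
      Finset.nonempty_of_ne_empty (fun h => hB (h ▸ hm0)))).symm
  rw [h1]
  apply Finset.sum_le_sum_of_subset_of_nonneg
  · intro B hB
    simp only [mem_filter, mem_powerset, mem_univ, true_and] at hB ⊢
    obtain ⟨x, hxB, hx⟩ := exists_first ρ hB.2
    exact ⟨x, hB.1 hxB, hxB, hx⟩
  · intro B _ _
    exact hm B

lemma sum_permVertex_tail {m : Finset Θ → ℝ} (hm0 : m ∅ = 0)
    (ρ : Fin (Fintype.card Θ) ≃ Θ) (k : ℕ) :
    ∑ x ∈ univ.filter (fun x => k ≤ ((ρ.symm x : Fin (Fintype.card Θ)) : ℕ)), permVertex m ρ x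
      = Bel m (univ.filter (fun x => k ≤ ((ρ.symm x : Fin (Fintype.card Θ)) : ℕ))) := by
  set T := univ.filter (fun x : Θ => k ≤ ((ρ.symm x : Fin (Fintype.card Θ)) : ℕ)) with hTdef
  rw [sum_permVertex_eq, Bel]
  have hset : univ.filter (fun A : Finset Θ =>
        ∃ x ∈ T, x ∈ A ∧ ∀ j : Fin (Fintype.card Θ), j < ρ.symm x → ρ j ∉ A)
      = T.powerset.filter (fun B => B.Nonempty) := by
    ext A
    simp only [mem_filter, mem_powerset, mem_univ, true_and]
    constructor
    · rintro ⟨x, hxT, hxA, hav⟩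
      refine ⟨fun a ha => ?_, ⟨x, hxA⟩⟩
      have hxa : ρ.symm x ≤ ρ.symm a := by
        by_contra hcon
        exact hav _ (not_le.mp hcon) (by simpa using ha)
      rw [hTdef, mem_filter] at hxT ⊢
      exact ⟨mem_univ _, le_trans hxT.2 hxa⟩
    · rintro ⟨hsub, hne⟩
      obtain ⟨x, hxA, hx⟩ := exists_first ρ hne
      exact ⟨x, hsub hxA, hxA, hx⟩
  rw [hset]
  exact Finset.sum_filter_of_ne (fun B _ hB =>
    Finset.nonempty_of_ne_empty (fun h => hB (h ▸ hm0)))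

lemma sum_permVertex_univ {m : Finset Θ → ℝ} (hm0 : m ∅ = 0)
    (hm1 : (∑ A : Finset Θ, m A) = 1)
    (ρ : Fin (Fintype.card Θ) ≃ Θ) :
    ∑ x : Θ, permVertex m ρ x = 1 := by
  have h := sum_permVertex_tail hm0 ρ 0
  rw [Finset.filter_true_of_mem (fun _ _ => Nat.zero_le _)] at h
  rw [h, Bel, Finset.powerset_univ, hm1]

lemma abel_ineq (N : ℕ) (a D : ℕ → ℝ) (ha : ∀ i, i + 1 < N → a (i + 1) ≤ a i)
    (hD : ∀ i, 0 ≤ D i) (h0 : D 0 = 0) (hN : D N = 0) :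
    ∑ i ∈ Finset.range N, a i * (D i - D (i + 1)) ≤ 0 := by
  have key : ∀ i ∈ Finset.range N, a i * (D i - D (i + 1)) =
      (a i * D i - a (i + 1) * D (i + 1)) + (a (i + 1) - a i) * D (i + 1) := by
    intros; ring
  rw [Finset.sum_congr rfl key, Finset.sum_add_distrib,
    Finset.sum_range_sub' (fun i => a i * D i), h0, hN]
  have h2 : ∑ i ∈ Finset.range N, (a (i + 1) - a i) * D (i + 1) ≤ 0 := by
    apply Finset.sum_nonpos
    intro i hi
    rcases eq_or_lt_of_le (Nat.succ_le_of_lt (Finset.mem_range.mp hi)) with h | h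
    · have h' : i + 1 = N := h
      rw [h', hN, mul_zero]
    · exact mul_nonpos_of_nonpos_of_nonneg (sub_nonpos.mpr (ha i h)) (hD _)
  simp only [mul_zero, zero_mul, sub_zero]
  linarith

end Aux

/-- Proposition 2, Chateauneuf–Jaffray: the credal set
`P[Bel] = {p probability : ∑_{x ∈ A} p(x) ≥ Bel(A) ∀A}` is the convex hull of the
vertices `P^ρ` over all orderings `ρ` of the singletons. -/
theorem credalSet_eq_convexHull_permVertices
    {Θ : Type*} [Fintype Θ] [DecidableEq Θ] [Nonempty Θ]
    (m : Finset Θ → ℝ) (hm : IsBPA m) :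
    {p : Θ → ℝ | (∀ x, 0 ≤ p x) ∧ (∑ x : Θ, p x) = 1 ∧
        ∀ A : Finset Θ, Bel m A ≤ ∑ x ∈ A, p x} =
      convexHull ℝ (Set.range (permVertex m)) := by
  apply Set.Subset.antisymm
  · -- the hard direction : credal set ⊆ convex hull
    intro p hp
    obtain ⟨hp0, hp1, hpA⟩ := hp
    by_contra hmem
    obtain ⟨f, u, hfu, hup⟩ := geometric_hahn_banach_closed_point
      (convex_convexHull ℝ _) ((Set.finite_range (permVertex m)).isClosed_convexHull ℝ) hmem
    set c : Θ → ℝ := fun x => f (Pi.single x 1) with hc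
    have hrep : ∀ q : Θ → ℝ, f q = ∑ x : Θ, c x * q x := by
      intro q
      have hq : q = ∑ x : Θ, q x • (Pi.single x (1:ℝ) : Θ → ℝ) := by
        ext y
        rw [Finset.sum_apply]
        simp [Pi.single_apply]
      conv_lhs => rw [hq]
      rw [map_sum]
      refine Finset.sum_congr rfl (fun x _ => ?_)
      rw [map_smul, smul_eq_mul, mul_comm]
    set e : Fin (Fintype.card Θ) ≃ Θ := (Fintype.equivFin Θ).symm with he
    set ρ : Fin (Fintype.card Θ) ≃ Θ := (Tuple.sort (fun i => -(c (e i)))).trans e with hρ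
    have hanti : ∀ i j : Fin (Fintype.card Θ), i ≤ j → c (ρ j) ≤ c (ρ i) := by
      intro i j hij
      have h := Tuple.monotone_sort (fun i => -(c (e i))) hij
      simp only [Function.comp_apply] at h
      rw [hρ]
      simp only [Equiv.trans_apply]
      linarith
    set T : ℕ → Finset Θ :=
      fun k => univ.filter (fun x => k ≤ ((ρ.symm x : Fin (Fintype.card Θ)) : ℕ)) with hT
    set a : ℕ → ℝ := fun k => if hk : k < Fintype.card Θ then c (ρ ⟨k, hk⟩) else 0 with ha
    have hT0 : T 0 = univ := by
      simp only [hT]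
      exact Finset.filter_true_of_mem (fun _ _ => Nat.zero_le _)
    have hTn : T (Fintype.card Θ) = ∅ := by
      simp only [hT]
      rw [Finset.filter_eq_empty_iff]
      exact fun x _ => not_le.mpr (ρ.symm x).isLt
    have hTstep : ∀ (k : ℕ) (hk : k < Fintype.card Θ),
        T k = insert (ρ ⟨k, hk⟩) (T (k + 1)) ∧ ρ ⟨k, hk⟩ ∉ T (k + 1) := by
      intro k hk
      constructor
      · ext x
        simp only [hT, mem_filter, mem_univ, true_and, mem_insert]
        constructor
        · intro h
          rcases eq_or_lt_of_le h with h' | h'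
          · left
            have hx : ρ.symm x = ⟨k, hk⟩ := Fin.ext h'.symm
            calc x = ρ (ρ.symm x) := (Equiv.apply_symm_apply ρ x).symm
              _ = ρ ⟨k, hk⟩ := by rw [hx]
          · right; exact h'
        · rintro (rfl | h)
          · simp
          · exact Nat.le_of_succ_le h
      · simp only [hT, mem_filter, mem_univ, true_and, Equiv.symm_apply_apply]
        omega
    have hdecomp : ∀ g : Θ → ℝ,
        ∑ x : Θ, c x * g x =
          ∑ i ∈ Finset.range (Fintype.card Θ),
            a i * ((∑ x ∈ T i, g x) - (∑ x ∈ T (i + 1), g x)) := by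
      intro g
      rw [← Equiv.sum_comp ρ (fun x => c x * g x),
        ← Fin.sum_univ_eq_sum_range
          (fun k => a k * ((∑ x ∈ T k, g x) - ∑ x ∈ T (k + 1), g x)) (Fintype.card Θ)]
      refine Finset.sum_congr rfl (fun i _ => ?_)
      obtain ⟨hins, hnot⟩ := hTstep i i.isLt
      rw [hins, Finset.sum_insert hnot]
      have hai : a (i : ℕ) = c (ρ i) := by
        simp only [ha, dif_pos i.isLt, Fin.eta]
      simp only [Fin.eta]
      rw [hai]
      ring
    have hvtail : ∀ k : ℕ, ∑ x ∈ T k, permVertex m ρ x = Bel m (T k) := by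
      intro k
      simp only [hT]
      exact sum_permVertex_tail hm.1 ρ k
    have hkey : f p ≤ f (permVertex m ρ) := by
      rw [hrep p, hrep (permVertex m ρ), ← sub_nonpos, hdecomp p, hdecomp (permVertex m ρ),
        ← Finset.sum_sub_distrib]
      set D : ℕ → ℝ := fun k => (∑ x ∈ T k, p x) - (∑ x ∈ T k, permVertex m ρ x) with hD
      have hterm : ∀ i ∈ Finset.range (Fintype.card Θ),
          a i * ((∑ x ∈ T i, p x) - ∑ x ∈ T (i + 1), p x)
            - a i * ((∑ x ∈ T i, permVertex m ρ x) - ∑ x ∈ T (i + 1), permVertex m ρ x)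
          = a i * (D i - D (i + 1)) := by
        intro i _
        simp only [hD]
        ring
      rw [Finset.sum_congr rfl hterm]
      apply abel_ineq
      · intro i hi1
        simp only [ha, dif_pos hi1, dif_pos (Nat.lt_of_succ_lt hi1)]
        refine hanti _ _ ?_
        simp only [Fin.mk_le_mk]
        omega
      · intro k
        simp only [hD, sub_nonneg, hvtail k]
        exact hpA (T k)
      · simp only [hD, hT0, hp1, sum_permVertex_univ hm.1 hm.2.2 ρ, sub_self]
      · simp only [hD, hTn, Finset.sum_empty, sub_self]
    have hlt : f (permVertex m ρ) < u :=
      hfu (permVertex m ρ) (subset_convexHull ℝ _ ⟨ρ, rfl⟩)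
    linarith
  · -- easy direction : convex hull ⊆ credal set
    apply convexHull_min
    · rintro v ⟨ρ, rfl⟩
      exact ⟨permVertex_nonneg hm.2.1 ρ, sum_permVertex_univ hm.1 hm.2.2 ρ,
        fun A => Bel_le_sum_permVertex hm.1 hm.2.1 ρ A⟩
    · intro p hp q hq α β hα hβ hαβ
      obtain ⟨hp0, hp1, hpA⟩ := hp
      obtain ⟨hq0, hq1, hqA⟩ := hq
      refine ⟨fun x => ?_, ?_, fun A => ?_⟩
      · simp only [Pi.add_apply, Pi.smul_apply, smul_eq_mul]
        exact add_nonneg (mul_nonneg hα (hp0 x)) (mul_nonneg hβ (hq0 x))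
      · simp only [Pi.add_apply, Pi.smul_apply, smul_eq_mul, Finset.sum_add_distrib,
          ← Finset.mul_sum, hp1, hq1, mul_one]
        exact hαβ
      · calc Bel m A = α * Bel m A + β * Bel m A := by rw [← add_mul, hαβ, one_mul]
          _ ≤ α * (∑ x ∈ A, p x) + β * (∑ x ∈ A, q x) :=
            add_le_add (mul_le_mul_of_nonneg_left (hpA A) hα)
              (mul_le_mul_of_nonneg_left (hqA A) hβ)
          _ = ∑ x ∈ A, (α • p + β • q) x := by
            simp only [Pi.add_apply, Pi.smul_apply, smul_eq_mul, Finset.sum_add_distrib,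
              Finset.mul_sum]
end

section
/- Let m be a basic probability assignment on a finite nonempty set Θ with k_Bel < 1. Then the intersection probability has the same affine coordinates, given by the relative uncertainty of singletons, in the lower and upper simplices: for every y ∈ Θ, p[Bel](y) = ∑_{x∈Θ} R[Bel](x)·t¹_x(y) and p[Bel](y) = ∑_{x∈Θ} R[Bel](x)·t^{n−1}_x(y). -/
open Finset

/-- Vertex `t^{n-1}_x` of the upper simplex. -/
noncomputable def upperVertex {Θ : Type*} [Fintype Θ] [DecidableEq Θ]
    (m : Finset Θ → ℝ) (x : Θ) : Θ → ℝ :=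
  fun y => if y = x then Pl m {y} + 1 - kPl m else Pl m {y}

/-- Relative uncertainty of singletons `R[Bel](x) = (Pl(x) - m(x))/(k_Pl - k_Bel)`. -/
noncomputable def relUnc {Θ : Type*} [Fintype Θ] [DecidableEq Θ]
    (m : Finset Θ → ℝ) (x : Θ) : ℝ :=
  (Pl m {x} - m {x}) / (kPl m - kBel m)


lemma kPl_eq_sum_card {Θ : Type*} [Fintype Θ] [DecidableEq Θ] (m : Finset Θ → ℝ) :
    kPl m = ∑ B : Finset Θ, (B.card : ℝ) * m B := by
  unfold kPl Pl
  have h : ∀ x : Θ, ∀ B : Finset Θ, (B ∩ {x} ≠ ∅) ↔ x ∈ B := by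
    intro x B
    simp [Finset.eq_empty_iff_forall_notMem]
  simp only [Finset.sum_filter]
  rw [Finset.sum_comm]
  refine Finset.sum_congr rfl fun B _ => ?_
  simp only [h]
  rw [Finset.sum_ite_mem, Finset.univ_inter, Finset.sum_const, nsmul_eq_mul]

lemma kBel_eq_sum_singletons {Θ : Type*} [Fintype Θ] [DecidableEq Θ] (m : Finset Θ → ℝ) :
    kBel m = ∑ B ∈ Finset.univ.filter (fun B : Finset Θ => B.card = 1), m B := by
  have himg : Finset.univ.filter (fun B : Finset Θ => B.card = 1)
      = Finset.univ.image (fun x : Θ => ({x} : Finset Θ)) := by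
    ext B; simp [Finset.card_eq_one, eq_comm]
  rw [himg, Finset.sum_image (fun x _ y _ h => Finset.singleton_injective h)]
  rfl

lemma kDiff_pos {Θ : Type*} [Fintype Θ] [DecidableEq Θ] [Nonempty Θ]
    (m : Finset Θ → ℝ) (hm : IsBPA m) (h1 : kBel m < 1) :
    0 < kPl m - kBel m := by
  obtain ⟨h0, hpos, hsum⟩ := hm
  have key : 1 - kBel m ≤ kPl m - kBel m := by
    calc 1 - kBel m
        = ∑ B : Finset Θ, (m B - if B.card = 1 then m B else 0) := by
          rw [Finset.sum_sub_distrib, hsum, ← Finset.sum_filter, ← kBel_eq_sum_singletons]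
      _ ≤ ∑ B : Finset Θ, ((B.card : ℝ) * m B - if B.card = 1 then m B else 0) := by
          refine Finset.sum_le_sum fun B _ => ?_
          refine sub_le_sub_right ?_ _
          rcases Nat.eq_zero_or_pos B.card with h | h
          · rw [Finset.card_eq_zero] at h
            subst h; simp [h0]
          · have : (1 : ℝ) ≤ (B.card : ℝ) := by exact_mod_cast h
            nlinarith [hpos B]
      _ = kPl m - kBel m := by
          rw [Finset.sum_sub_distrib, ← Finset.sum_filter, ← kBel_eq_sum_singletons,
            ← kPl_eq_sum_card]
  linarith

lemma sum_relUnc {Θ : Type*} [Fintype Θ] [DecidableEq Θ] [Nonempty Θ]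
    (m : Finset Θ → ℝ) (hm : IsBPA m) (h1 : kBel m < 1) :
    ∑ x : Θ, relUnc m x = 1 := by
  have hD := kDiff_pos m hm h1
  unfold relUnc
  rw [← Finset.sum_div, Finset.sum_sub_distrib]
  rw [show ∑ x : Θ, Pl m {x} = kPl m from rfl, show ∑ x : Θ, m {x} = kBel m from rfl]
  field_simp

/-- Theorem 4: the intersection probability has the same affine
coordinates, given by the relative uncertainty of singletons, in the lower and the
upper simplices. -/
theorem pInt_same_coordinates_in_lower_and_upper_simplices
    {Θ : Type*} [Fintype Θ] [DecidableEq Θ] [Nonempty Θ]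
    (m : Finset Θ → ℝ) (hm : IsBPA m) (h1 : kBel m < 1) :
    ∀ y : Θ,
      pInt m y = ∑ x : Θ, relUnc m x * lowerVertex m x y ∧
      pInt m y = ∑ x : Θ, relUnc m x * upperVertex m x y := by
  have hD := kDiff_pos m hm h1
  have hD' : kPl m - kBel m ≠ 0 := ne_of_gt hD
  have hsum := sum_relUnc m hm h1
  intro y
  constructor
  · have hterm : ∀ x : Θ, relUnc m x * lowerVertex m x y
        = relUnc m x * m {y} + (if y = x then relUnc m y * (1 - kBel m) else 0) := by
      intro x
      unfold lowerVertex
      by_cases h : y = x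
      · subst h; simp; ring
      · simp [h]
    rw [Finset.sum_congr rfl fun x _ => hterm x, Finset.sum_add_distrib,
      Finset.sum_ite_eq Finset.univ y, ← Finset.sum_mul, hsum]
    simp only [Finset.mem_univ, if_true, one_mul]
    unfold pInt betaBel relUnc
    field_simp
  · have hterm : ∀ x : Θ, relUnc m x * upperVertex m x y
        = relUnc m x * Pl m {y} + (if y = x then relUnc m y * (1 - kPl m) else 0) := by
      intro x
      unfold upperVertex
      by_cases h : y = x
      · subst h; simp; ring
      · simp [h]
    rw [Finset.sum_congr rfl fun x _ => hterm x, Finset.sum_add_distrib,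
      Finset.sum_ite_eq Finset.univ y, ← Finset.sum_mul, hsum]
    simp only [Finset.mem_univ, if_true, one_mul]
    unfold pInt betaBel relUnc
    field_simp
    ring
end

section
/- Let m₁, m₂ be basic probability assignments on a finite nonempty set Θ with D₁ > 0 and D₂ > 0, where Nᵢ = ∑_{A⊆Θ, |A|>1} mᵢ(A) and Dᵢ = ∑_{A⊆Θ, |A|>1} |A|·mᵢ(A), and let βᵢ = Nᵢ/Dᵢ. Define the cross transforms p[Bel₂,Bel₁](x) = m₂(x) + β₁·(Pl₂(x) − m₂(x)) and p[Bel₁,Bel₂](x) = m₁(x) + β₂·(Pl₁(x) − m₁(x)), and T(x) = (D₁·p[Bel₂,Bel₁](x) + D₂·p[Bel₁,Bel₂](x))/(D₁ + D₂). Then for every α₁ ∈ [0,1] with α₂ = 1 − α₁ and every x ∈ Θ, the intersection probability of the affine combination α₁m₁ + α₂m₂ satisfies p[α₁Bel₁ + α₂Bel₂](x) = ( α₁D₁·(α₁·p[Bel₁](x) + α₂·T(x)) + α₂D₂·(α₁·T(x) + α₂·p[Bel₂](x)) ) / (α₁D₁ + α₂D₂). -/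
open Finset

/-- `N = ∑_{|A| > 1} m(A)`, total mass of non-singleton focal elements. -/
noncomputable def bigN {Θ : Type*} [Fintype Θ] (m : Finset Θ → ℝ) : ℝ :=
  ∑ A ∈ Finset.univ.filter (fun A : Finset Θ => 1 < A.card), m A

/-- `D = ∑_{|A| > 1} |A|⬝m(A)`. -/
noncomputable def bigD {Θ : Type*} [Fintype Θ] (m : Finset Θ → ℝ) : ℝ :=
  ∑ A ∈ Finset.univ.filter (fun A : Finset Θ => 1 < A.card), (A.card : ℝ) * m A

/-- `β = N/D`. -/
noncomputable def betaND {Θ : Type*} [Fintype Θ] (m : Finset Θ → ℝ) : ℝ :=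
  bigN m / bigD m

/-- Intersection probability `p[Bel](x) = m(x) + β⬝(Pl(x) - m(x))` with `β = N/D`. -/
noncomputable def pIntND {Θ : Type*} [Fintype Θ] [DecidableEq Θ]
    (m : Finset Θ → ℝ) (x : Θ) : ℝ :=
  m {x} + betaND m * (Pl m {x} - m {x})

/-- Cross transform `p[Bel₁,Bel₂](x) = m₁(x) + β[Bel₂]⬝(Pl₁(x) - m₁(x))`. -/
noncomputable def crossP {Θ : Type*} [Fintype Θ] [DecidableEq Θ]
    (m₁ m₂ : Finset Θ → ℝ) (x : Θ) : ℝ :=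
  m₁ {x} + betaND m₂ * (Pl m₁ {x} - m₁ {x})

/-- The probability `T[Bel₁,Bel₂](x) = (D₁⬝p[Bel₂,Bel₁](x) + D₂⬝p[Bel₁,Bel₂](x))/(D₁+D₂)`. -/
noncomputable def crossT {Θ : Type*} [Fintype Θ] [DecidableEq Θ]
    (m₁ m₂ : Finset Θ → ℝ) (x : Θ) : ℝ :=
  (bigD m₁ * crossP m₂ m₁ x + bigD m₂ * crossP m₁ m₂ x) / (bigD m₁ + bigD m₂)

/-!
Clearing the denominator, `D(m) · crossP m₁ m x = D(m) · m₁(x) + N(m) · (Pl m₁ x - m₁ x)` is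
bilinear in `(m, m₁)`, since `N`, `D` and `Pl` are linear in the mass assignment. Expanding this for
the mixture `α₁ m₁ + α₂ m₂` in both slots gives
`α₁² D₁ p[Bel₁] + α₂² D₂ p[Bel₂] + α₁ α₂ (D₁ p[Bel₂,Bel₁] + D₂ p[Bel₁,Bel₂])`,
and the cross term is `α₁ α₂ (D₁ + D₂) T` by the definition of `T`. Positivity of `D₁`, `D₂` and
of the weights makes every cleared denominator nonzero.
-/

section LinearComb

variable {Θ : Type*} [Fintype Θ]

theorem bigN_linear_comb (a b : ℝ) (m₁ m₂ : Finset Θ → ℝ) :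
    bigN (fun A => a * m₁ A + b * m₂ A) = a * bigN m₁ + b * bigN m₂ := by
  simp only [bigN, sum_add_distrib, mul_sum]

theorem bigD_linear_comb (a b : ℝ) (m₁ m₂ : Finset Θ → ℝ) :
    bigD (fun A => a * m₁ A + b * m₂ A) = a * bigD m₁ + b * bigD m₂ := by
  simp only [bigD, mul_sum, ← sum_add_distrib]
  exact sum_congr rfl fun _ _ => by ring

theorem Pl_linear_comb [DecidableEq Θ] (a b : ℝ) (m₁ m₂ : Finset Θ → ℝ) (B : Finset Θ) :
    Pl (fun A => a * m₁ A + b * m₂ A) B = a * Pl m₁ B + b * Pl m₂ B := by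
  simp only [Pl, sum_add_distrib, mul_sum]

theorem pIntND_eq_crossP [DecidableEq Θ] (m : Finset Θ → ℝ) : pIntND m = crossP m m := rfl

theorem bigD_mul_crossP [DecidableEq Θ] {m₂ : Finset Θ → ℝ} (hD : bigD m₂ ≠ 0)
    (m₁ : Finset Θ → ℝ) (x : Θ) :
    bigD m₂ * crossP m₁ m₂ x = bigD m₂ * m₁ {x} + bigN m₂ * (Pl m₁ {x} - m₁ {x}) := by
  rw [crossP, betaND]
  field_simp

theorem bigD_add_mul_crossT [DecidableEq Θ] {m₁ m₂ : Finset Θ → ℝ} (hD : bigD m₁ + bigD m₂ ≠ 0)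
    (x : Θ) :
    (bigD m₁ + bigD m₂) * crossT m₁ m₂ x = bigD m₁ * crossP m₂ m₁ x + bigD m₂ * crossP m₁ m₂ x :=
  mul_div_cancel₀ _ hD

end LinearComb

theorem pInt_of_affine_combination_general
    {Θ : Type*} [Fintype Θ] [DecidableEq Θ]
    (m₁ m₂ : Finset Θ → ℝ)
    (hD₁ : 0 < bigD m₁) (hD₂ : 0 < bigD m₂)
    (α₁ α₂ : ℝ) (hα₁ : 0 ≤ α₁) (hα₁' : α₁ ≤ 1) (hα : α₂ = 1 - α₁) (x : Θ) :
    pIntND (fun A => α₁ * m₁ A + α₂ * m₂ A) x =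
      (α₁ * bigD m₁ * (α₁ * pIntND m₁ x + α₂ * crossT m₁ m₂ x) +
          α₂ * bigD m₂ * (α₁ * crossT m₁ m₂ x + α₂ * pIntND m₂ x)) /
        (α₁ * bigD m₁ + α₂ * bigD m₂) := by
  set m := fun A => α₁ * m₁ A + α₂ * m₂ A
  have hα₂ : 0 ≤ α₂ := by linarith
  have hDpos : 0 < α₁ * bigD m₁ + α₂ * bigD m₂ := by
    rcases hα₁.eq_or_lt with rfl | hpos
    · simp only [zero_mul, zero_add]; nlinarith
    · positivity
  have hD : bigD m = α₁ * bigD m₁ + α₂ * bigD m₂ := bigD_linear_comb α₁ α₂ m₁ m₂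
  have hmix := bigD_mul_crossP (hD ▸ hDpos.ne') m x
  rw [hD, bigN_linear_comb, Pl_linear_comb, ← pIntND_eq_crossP] at hmix
  have h₁ := bigD_mul_crossP hD₁.ne' m₁ x
  have h₂ := bigD_mul_crossP hD₂.ne' m₂ x
  have h₁₂ := bigD_mul_crossP hD₂.ne' m₁ x
  have h₂₁ := bigD_mul_crossP hD₁.ne' m₂ x
  have hT := bigD_add_mul_crossT (m₁ := m₁) (m₂ := m₂) (by positivity) x
  rw [← pIntND_eq_crossP] at h₁ h₂
  rw [eq_div_iff hDpos.ne']
  linear_combination hmix - α₁ ^ 2 * h₁ - α₂ ^ 2 * h₂ - α₁ * α₂ * (h₁₂ + h₂₁ + hT)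

/-- Theorem 8: the intersection probability of an affine combination
`α₁Bel₁ + α₂Bel₂` decomposes through the cross probability `T[Bel₁,Bel₂]`. -/
theorem pInt_of_affine_combination
    {Θ : Type*} [Fintype Θ] [DecidableEq Θ] [Nonempty Θ]
    (m₁ m₂ : Finset Θ → ℝ) (hm₁ : IsBPA m₁) (hm₂ : IsBPA m₂)
    (hD₁ : 0 < bigD m₁) (hD₂ : 0 < bigD m₂)
    (α₁ α₂ : ℝ) (hα₁ : 0 ≤ α₁) (hα₁' : α₁ ≤ 1) (hα : α₂ = 1 - α₁) (x : Θ) :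
    pIntND (fun A => α₁ * m₁ A + α₂ * m₂ A) x =
      (α₁ * bigD m₁ * (α₁ * pIntND m₁ x + α₂ * crossT m₁ m₂ x) +
          α₂ * bigD m₂ * (α₁ * crossT m₁ m₂ x + α₂ * pIntND m₂ x)) /
        (α₁ * bigD m₁ + α₂ * bigD m₂) :=
  pInt_of_affine_combination_general m₁ m₂ hD₁ hD₂ α₁ α₂ hα₁ hα₁' hα x
end

section
/- Let m₁, m₂ be basic probability assignments on a finite nonempty set Θ with D₁ > 0 and D₂ > 0, where Nᵢ = ∑_{A⊆Θ, |A|>1} mᵢ(A), Dᵢ = ∑_{A⊆Θ, |A|>1} |A|·mᵢ(A), βᵢ = Nᵢ/Dᵢ, and Rᵢ(x) = (Plᵢ(x) − mᵢ(x))/Dᵢ is the relative uncertainty of singletons. Then the intersection probability commutes with convex combination, i.e., p[α₁Bel₁ + α₂Bel₂](x) = α₁·p[Bel₁](x) + α₂·p[Bel₂](x) holds for all α₁ ∈ [0,1] (α₂ = 1 − α₁) and all x ∈ Θ, if and only if β₁ = β₂ or R₁(x) = R₂(x) for all x ∈ Θ. -/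
open Finset

/-- Relative uncertainty of singletons `R(x) = (Pl(x) - m(x))/D`. -/
noncomputable def relUncND {Θ : Type*} [Fintype Θ] [DecidableEq Θ]
    (m : Finset Θ → ℝ) (x : Θ) : ℝ :=
  (Pl m {x} - m {x}) / bigD m

/-!
`N`, `D` and `Pl` are linear in the mass assignment, so the commutation defect
`p[α m₁ + (1 - α) m₂](x) - (α p[m₁](x) + (1 - α) p[m₂](x))` factors as
`α (1 - α) D₁ D₂ (β₁ - β₂) (R₂(x) - R₁(x)) / (α D₁ + (1 - α) D₂)`.
At `α = 1/2` every factor other than the last two is nonzero.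
-/

section LinearCombination

variable {Θ : Type*} [Fintype Θ] (m₁ m₂ : Finset Θ → ℝ) (a b : ℝ)

lemma bigN_lincomb : bigN (fun A => a * m₁ A + b * m₂ A) = a * bigN m₁ + b * bigN m₂ := by
  simp only [bigN, Finset.sum_add_distrib, ← Finset.mul_sum]

lemma bigD_lincomb : bigD (fun A => a * m₁ A + b * m₂ A) = a * bigD m₁ + b * bigD m₂ := by
  simp only [bigD, mul_add, mul_left_comm _ a, mul_left_comm _ b, Finset.sum_add_distrib,
    ← Finset.mul_sum]

lemma Pl_lincomb [DecidableEq Θ] (A : Finset Θ) :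
    Pl (fun B => a * m₁ B + b * m₂ B) A = a * Pl m₁ A + b * Pl m₂ A := by
  simp only [Pl, Finset.sum_add_distrib, ← Finset.mul_sum]

end LinearCombination

lemma pIntND_lincomb_sub {Θ : Type*} [Fintype Θ] [DecidableEq Θ] (m₁ m₂ : Finset Θ → ℝ)
    (α : ℝ) (x : Θ) (hD₁ : bigD m₁ ≠ 0) (hD₂ : bigD m₂ ≠ 0)
    (hD : α * bigD m₁ + (1 - α) * bigD m₂ ≠ 0) :
    pIntND (fun A => α * m₁ A + (1 - α) * m₂ A) x - (α * pIntND m₁ x + (1 - α) * pIntND m₂ x) =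
      α * (1 - α) * bigD m₁ * bigD m₂ * (betaND m₁ - betaND m₂) *
        (relUncND m₂ x - relUncND m₁ x) / (α * bigD m₁ + (1 - α) * bigD m₂) := by
  simp only [pIntND, betaND, relUncND, bigN_lincomb, bigD_lincomb, Pl_lincomb]
  field_simp
  ring

theorem pInt_commutes_with_convex_combination_iff_general
    {Θ : Type*} [Fintype Θ] [DecidableEq Θ]
    (m₁ m₂ : Finset Θ → ℝ)
    (hD₁ : 0 < bigD m₁) (hD₂ : 0 < bigD m₂) :
    (∀ α₁ : ℝ, 0 ≤ α₁ → α₁ ≤ 1 → ∀ x : Θ,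
        pIntND (fun A => α₁ * m₁ A + (1 - α₁) * m₂ A) x =
          α₁ * pIntND m₁ x + (1 - α₁) * pIntND m₂ x) ↔
      (betaND m₁ = betaND m₂ ∨ ∀ x : Θ, relUncND m₁ x = relUncND m₂ x) := by
  constructor
  · intro h
    by_cases hβ : betaND m₁ = betaND m₂
    · exact Or.inl hβ
    refine Or.inr fun x => ?_
    have hx := sub_eq_zero.2 (h (1 / 2) (by norm_num) (by norm_num) x)
    have hD : 0 < 1 / 2 * bigD m₁ + (1 - 1 / 2) * bigD m₂ := by positivity
    rw [pIntND_lincomb_sub m₁ m₂ _ x hD₁.ne' hD₂.ne' hD.ne', div_eq_zero_iff,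
      or_iff_left hD.ne'] at hx
    norm_num [hD₁.ne', hD₂.ne', sub_eq_zero, hβ] at hx
    exact hx.symm
  · rintro h α hα₀ hα₁ x
    have hD : 0 < α * bigD m₁ + (1 - α) * bigD m₂ :=
      convex_Ioi (0 : ℝ) hD₁ hD₂ hα₀ (sub_nonneg.2 hα₁) (add_sub_cancel α 1)
    rw [← sub_eq_zero, pIntND_lincomb_sub m₁ m₂ α x hD₁.ne' hD₂.ne' hD.ne']
    rcases h with hβ | hR
    · simp [hβ]
    · simp [hR x]

/-- Theorem 9: the intersection probability commutes with convex
combination iff `β[Bel₁] = β[Bel₂]` or `R[Bel₁] = R[Bel₂]`. -/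
theorem pInt_commutes_with_convex_combination_iff
    {Θ : Type*} [Fintype Θ] [DecidableEq Θ] [Nonempty Θ]
    (m₁ m₂ : Finset Θ → ℝ) (hm₁ : IsBPA m₁) (hm₂ : IsBPA m₂)
    (hD₁ : 0 < bigD m₁) (hD₂ : 0 < bigD m₂) :
    (∀ α₁ : ℝ, 0 ≤ α₁ → α₁ ≤ 1 → ∀ x : Θ,
        pIntND (fun A => α₁ * m₁ A + (1 - α₁) * m₂ A) x =
          α₁ * pIntND m₁ x + (1 - α₁) * pIntND m₂ x) ↔
      (betaND m₁ = betaND m₂ ∨ ∀ x : Θ, relUncND m₁ x = relUncND m₂ x) :=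
  pInt_commutes_with_convex_combination_iff_general m₁ m₂ hD₁ hD₂
end
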